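/- arXiv:1801.04359 — 6 statements merged into one kernel-verified Lean document; each statement's English description precedes it below -/
import Mathlib

section
/- The function p*(s) = θN₀s/(h(1 - Σⱼ sⱼmⱼθ)) is the unique solution of the system SINR_i = p_i h_i/(N₀ + Σⱼ p_j m_j h_j) = θ s_i for all i with h_i > 0, where s_i, m_i ∈ [0,1]. -/
/-- The power vector p*(s) with p*_i = θN₀s_i/(h_i(1 - Σⱼ sⱼ mⱼ θ)) is the unique
nonnegative solution of the SINR system SINR_i(p) = θ s_i for all i. -/
theorem stmt_0 (K : ℕ) (hK : 1 ≤ K) (h m s : Fin K → ℝ) (N₀ θ : ℝ)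
    (hh : ∀ i, 0 < h i) (hm : ∀ i, m i ∈ Set.Icc (0:ℝ) 1)
    (hmsum : ∑ i, m i ≤ 1) (hs : ∀ i, s i ∈ Set.Icc (0:ℝ) 1)
    (hN : 0 < N₀) (hθ : 0 < θ) (hlt : θ * ∑ j, s j * m j < 1)
    (p : Fin K → ℝ) (hp : ∀ i, 0 ≤ p i) :
    (∀ i, p i * h i / (N₀ + ∑ j, p j * m j * h j) = θ * s i) ↔
      p = fun i => θ * N₀ * s i / (h i * (1 - (∑ j, s j * m j) * θ)) := by
  have hc : 0 < 1 - (∑ j, s j * m j) * θ := by nlinarith [hlt]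
  constructor
  · intro hyp
    have hsnn : 0 ≤ ∑ j, p j * m j * h j :=
      Finset.sum_nonneg fun j _ =>
        mul_nonneg (mul_nonneg (hp j) (hm j).1) (hh j).le
    have hD : 0 < N₀ + ∑ j, p j * m j * h j := by linarith
    have key : ∀ i, p i * h i = θ * s i * (N₀ + ∑ j, p j * m j * h j) := by
      intro i
      have := hyp i
      field_simp at this
      linarith [this]
    have hsum : ∑ j, p j * m j * h j
        = θ * (N₀ + ∑ j, p j * m j * h j) * ∑ j, s j * m j := by
      rw [Finset.mul_sum]
      apply Finset.sum_congr rfl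
      intro j _
      linear_combination key j * m j
    have hDval : (N₀ + ∑ j, p j * m j * h j) * (1 - (∑ j, s j * m j) * θ) = N₀ := by
      nlinarith [hsum]
    funext i
    have hk := key i
    have hhi := hh i
    rw [eq_div_iff (mul_pos hhi hc).ne']
    linear_combination (1 - (∑ j, s j * m j) * θ) * hk + θ * s i * hDval
  · intro hpe
    subst hpe
    intro i
    have hsum : ∑ j, (θ * N₀ * s j / (h j * (1 - (∑ j, s j * m j) * θ))) * m j * h j
        = θ * N₀ / (1 - (∑ j, s j * m j) * θ) * ∑ j, s j * m j := by
      rw [Finset.mul_sum]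
      apply Finset.sum_congr rfl
      intro j _
      have hhj := (hh j).ne'
      field_simp
    rw [hsum]
    have hhi := (hh i).ne'
    have hD : N₀ + θ * N₀ / (1 - (∑ j, s j * m j) * θ) * ∑ j, s j * m j
        = N₀ / (1 - (∑ j, s j * m j) * θ) := by
      rw [div_mul_eq_mul_div, add_div' _ _ _ hc.ne']
      congr 1
      ring
    rw [hD]
    have hcne := hc.ne'
    have hNne := hN.ne'
    have hc' : 1 - θ * ∑ x, s x * m x ≠ 0 := by rw [mul_comm]; exact hcne
    field_simp
end

section
/- The vector (m̄₁, m̄₂, m̄₃, m̄₄) with m̄₁ = β₀β₁(1-ρ)s̄₄/(ρ + β₁s̄₄(1-ρ)), m̄₂ = β₀ρ/(ρ + β₁s̄₄(1-ρ)), m̄₃ = β₁²(1-ρ)s̄₄/(ρ + β₁s̄₄(1-ρ)), m̄₄ = β₁ρ/(ρ + β₁s̄₄(1-ρ)) satisfies U(s̄₄)·(m̄₁,m̄₂,m̄₃,m̄₄)ᵀ = 0, where U(s̄₄) is the 4×4 generator matrix with rows ( -β₁-β₀ρ, 0, β₀(1-ρ), s̄₄β₀(1-ρ) ), ( β₀ρ,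 -β₁, β₀ρ, s̄₄β₀ρ + (1-s̄₄)β₀ ), ( β₁(1-ρ), 0, -β₁ρ-β₀, s̄₄β₁(1-ρ) ), ( β₁ρ, β₁, β₁ρ, -s̄₄β₁(1-ρ)-β₀ ). -/
/-- The explicit equilibrium vector satisfies U(s̄₄)·m̄ = 0. -/
theorem stmt_3 (ρ β₁ : ℝ) (hρ0 : 0 < ρ) (hρ1 : ρ < 1) (hβ0 : 0 < β₁) (hβ1 : β₁ < 1)
    (s₄ : ℝ) (hs₄ : s₄ ∈ Set.Icc (0:ℝ) 1) :
    let β₀ := 1 - β₁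
    let d := ρ + β₁ * s₄ * (1 - ρ)
    let m₁ := β₀ * β₁ * (1 - ρ) * s₄ / d
    let m₂ := β₀ * ρ / d
    let m₃ := β₁ ^ 2 * (1 - ρ) * s₄ / d
    let m₄ := β₁ * ρ / d
    (-β₁ - β₀ * ρ) * m₁ + 0 * m₂ + β₀ * (1 - ρ) * m₃ + s₄ * β₀ * (1 - ρ) * m₄ = 0 ∧
    β₀ * ρ * m₁ + (-β₁) * m₂ + β₀ * ρ * m₃ + (s₄ * β₀ * ρ + (1 - s₄) * β₀) * m₄ = 0 ∧
    β₁ * (1 - ρ) * m₁ + 0 * m₂ + (-(β₁ * ρ) - β₀) * m₃ + s₄ * β₁ * (1 - ρ) * m₄ = 0 ∧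
    β₁ * ρ * m₁ + β₁ * m₂ + β₁ * ρ * m₃ + (-(s₄ * β₁ * (1 - ρ)) - β₀) * m₄ = 0 := by
  obtain ⟨hs0, hs1⟩ := hs₄
  intro β₀ d m₁ m₂ m₃ m₄
  have hd : d ≠ 0 := by
    have : 0 ≤ β₁ * s₄ * (1 - ρ) := mul_nonneg (mul_nonneg hβ0.le hs0) (by linarith)
    simp only [d]; nlinarith
  simp only [m₁, m₂, m₃, m₄]
  refine ⟨?_, ?_, ?_, ?_⟩ <;> field_simp <;> ring
end

section
/- Under the assumption N₀ ≤ λ(1-ρ)(1-β₁θ)²/(ρθ²), the equilibrium cost E(s̄₄) = θN₀s̄₄/(1 - θm̄₄(s̄₄)) + λ(m̄₂(s̄₄) + m̄₄(s̄₄)), with m̄₄ = β₁ρ/(ρ+β₁s̄₄(1-ρ)) and m̄₂ = (1-β₁)ρ/(ρ+β₁s̄₄(1-ρ)), is convex on [0,1]. -/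
set_option maxHeartbeats 1000000
set_option linter.all false

private lemma convexOn_congr_aux {s : Set ℝ} {f g : ℝ → ℝ} (h : ConvexOn ℝ s g)
    (he : ∀ x ∈ s, f x = g x) : ConvexOn ℝ s f :=
  ⟨h.1, fun x hx y hy a b ha hb hab => by
    rw [he x hx, he y hy, he _ (h.1 hx hy ha hb hab)]
    exact h.2 hx hy ha hb hab⟩

/-- If N₀ ≤ λ(1-ρ)(1-β₁θ)²/(ρθ²), the equilibrium cost E is convex on [0,1]. -/
theorem stmt_8 (ρ β₁ θ N₀ lam : ℝ) (hρ0 : 0 < ρ) (hρ1 : ρ < 1)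
    (hβ0 : 0 < β₁) (hβ1 : β₁ < 1) (hθ0 : 0 < θ) (hθ1 : θ < 1) (hθβ : θ * β₁ < 1)
    (hN : 0 < N₀) (hlam : 0 < lam)
    (hcond : N₀ ≤ lam * (1 - ρ) * (1 - β₁ * θ) ^ 2 / (ρ * θ ^ 2)) :
    ConvexOn ℝ (Set.Icc (0:ℝ) 1)
      (fun s =>
        θ * N₀ * s / (1 - θ * (β₁ * ρ / (ρ + β₁ * s * (1 - ρ)))) +
        lam * ((1 - β₁) * ρ / (ρ + β₁ * s * (1 - ρ)) + β₁ * ρ / (ρ + β₁ * s * (1 - ρ)))) := by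
  set b : ℝ := β₁ * (1 - ρ) with hbdef
  set ρ' : ℝ := ρ * (1 - θ * β₁) with hρ'def
  have hb0 : 0 < b := mul_pos hβ0 (by linarith)
  have hρ'0 : 0 < ρ' := mul_pos hρ0 (by linarith)
  have hρ'ρ : ρ' ≤ ρ := by
    rw [hρ'def]; nlinarith [mul_pos hθ0 hβ0]
  set K₁ : ℝ := θ * N₀ * (θ * β₁ * ρ) * ρ' / b with hK₁def
  set K₂ : ℝ := lam * ρ with hK₂def
  set C₀ : ℝ := θ * N₀ * (θ * β₁ * ρ) / b with hC₀def
  set g : ℝ → ℝ := fun s => C₀ + θ * N₀ * s - K₁ * (b * s + ρ')⁻¹ + K₂ * (b * s + ρ)⁻¹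
    with hgdef
  set g' : ℝ → ℝ := fun s => θ * N₀ + K₁ * b * ((b * s + ρ') ^ 2)⁻¹
      - K₂ * b * ((b * s + ρ) ^ 2)⁻¹ with hg'def
  set g'' : ℝ → ℝ := fun s => -(2 * K₁ * b ^ 2) * ((b * s + ρ') ^ 3)⁻¹
      + (2 * K₂ * b ^ 2) * ((b * s + ρ) ^ 3)⁻¹ with hg''def
  have hE : ∀ x : ℝ, 0 ≤ x → 0 < b * x + ρ' := fun x hx =>
    add_pos_of_nonneg_of_pos (mul_nonneg hb0.le hx) hρ'0
  have hD : ∀ x : ℝ, 0 ≤ x → 0 < b * x + ρ := fun x hx =>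
    add_pos_of_nonneg_of_pos (mul_nonneg hb0.le hx) hρ0
  have hlin : ∀ (c : ℝ) (x : ℝ), HasDerivAt (fun s : ℝ => b * s + c) b x := by
    intro c x
    simpa using ((hasDerivAt_id x).const_mul b).add_const c
  have hder1 : ∀ x : ℝ, 0 ≤ x → HasDerivAt g (g' x) x := by
    intro x hx
    have d1 : HasDerivAt (fun s : ℝ => (b * s + ρ')⁻¹) (-b / (b * x + ρ') ^ 2) x :=
      (hlin ρ' x).inv (hE x hx).ne'
    have d2 : HasDerivAt (fun s : ℝ => (b * s + ρ)⁻¹) (-b / (b * x + ρ) ^ 2) x :=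
      (hlin ρ x).inv (hD x hx).ne'
    have := (((hasDerivAt_const x C₀).add ((hasDerivAt_id x).const_mul (θ * N₀))).sub
      (d1.const_mul K₁)).add (d2.const_mul K₂)
    convert this using 1
    · rfl
    · rfl
    · rfl
    · simp only [hg'def]
      have e1 := (hE x hx).ne'
      have e2 := (hD x hx).ne'
      field_simp
      ring
  have hder2 : ∀ x : ℝ, 0 ≤ x → HasDerivAt g' (g'' x) x := by
    intro x hx
    have d1 : HasDerivAt (fun s : ℝ => ((b * s + ρ') ^ 2)⁻¹)
        (-(2 * (b * x + ρ') ^ 1 * b) / ((b * x + ρ') ^ 2) ^ 2) x :=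
      ((hlin ρ' x).pow 2).inv (pow_ne_zero 2 (hE x hx).ne')
    have d2 : HasDerivAt (fun s : ℝ => ((b * s + ρ) ^ 2)⁻¹)
        (-(2 * (b * x + ρ) ^ 1 * b) / ((b * x + ρ) ^ 2) ^ 2) x :=
      ((hlin ρ x).pow 2).inv (pow_ne_zero 2 (hD x hx).ne')
    have := ((hasDerivAt_const x (θ * N₀)).add (d1.const_mul (K₁ * b))).sub
      (d2.const_mul (K₂ * b))
    convert this using 1
    · rfl
    · rfl
    · rfl
    · simp only [hg''def]
      have e1 := (hE x hx).ne'
      have e2 := (hD x hx).ne'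
      field_simp
      ring
  have hconv : ConvexOn ℝ (Set.Icc (0:ℝ) 1) g := by
    apply convexOn_of_hasDerivWithinAt2_nonneg (convex_Icc 0 1) (f' := g') (f'' := g'')
    · exact fun x hx => (hder1 x hx.1).continuousAt.continuousWithinAt
    · intro x hx
      rw [interior_Icc] at hx
      exact (hder1 x hx.1.le).hasDerivWithinAt
    · intro x hx
      rw [interior_Icc] at hx
      exact (hder2 x hx.1.le).hasDerivWithinAt
    · intro x hx
      rw [interior_Icc] at hx
      have hx0 : (0:ℝ) ≤ x := hx.1.le
      have hEx := hE x hx0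
      have hDx := hD x hx0
      simp only [hg''def]
      rw [neg_mul, neg_add_eq_sub, sub_nonneg, ← div_eq_mul_inv, ← div_eq_mul_inv,
        div_le_div_iff₀ (pow_pos hEx 3) (pow_pos hDx 3)]
      have hK₁le : K₁ * ρ ^ 3 ≤ K₂ * ρ' ^ 3 := by
        have h1 : 0 < ρ * θ ^ 2 := by positivity
        have key : N₀ * (ρ * θ ^ 2) ≤ lam * (1 - ρ) * (1 - β₁ * θ) ^ 2 :=
          (le_div_iff₀ h1).mp hcond
        rw [hK₁def, hK₂def, hρ'def, div_mul_eq_mul_div, div_le_iff₀ hb0, hbdef]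
        nlinarith [mul_le_mul_of_nonneg_right key
          (mul_nonneg (show (0:ℝ) ≤ β₁ * ρ ^ 4 by positivity)
            (show (0:ℝ) ≤ 1 - θ * β₁ by linarith))]
      have hcross : ρ' * (b * x + ρ) ≤ ρ * (b * x + ρ') := by
        have := mul_le_mul_of_nonneg_right hρ'ρ (mul_nonneg hb0.le hx0)
        nlinarith
      have h3 : (ρ' * (b * x + ρ)) ^ 3 ≤ (ρ * (b * x + ρ')) ^ 3 := by
        apply pow_le_pow_left₀ (by positivity) hcross
      have hK₁0 : 0 ≤ K₁ := by positivity
      have hK₂0 : 0 ≤ K₂ := by positivity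
      refine le_of_mul_le_mul_right ?_ (pow_pos hρ0 3)
      calc 2 * K₁ * b ^ 2 * (b * x + ρ) ^ 3 * ρ ^ 3
          = (2 * b ^ 2) * (K₁ * ρ ^ 3) * (b * x + ρ) ^ 3 := by ring
        _ ≤ (2 * b ^ 2) * (K₂ * ρ' ^ 3) * (b * x + ρ) ^ 3 := by
            apply mul_le_mul_of_nonneg_right _ (by positivity)
            exact mul_le_mul_of_nonneg_left hK₁le (by positivity)
        _ = (2 * b ^ 2 * K₂) * (ρ' * (b * x + ρ)) ^ 3 := by ring
        _ ≤ (2 * b ^ 2 * K₂) * (ρ * (b * x + ρ')) ^ 3 := by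
            exact mul_le_mul_of_nonneg_left h3 (by positivity)
        _ = 2 * K₂ * b ^ 2 * (b * x + ρ') ^ 3 * ρ ^ 3 := by ring
  apply convexOn_congr_aux hconv
  intro s hs
  have hs0 := hs.1
  have hDs : 0 < ρ + β₁ * s * (1 - ρ) := by nlinarith
  have hEs : 0 < b * s + ρ' := hE s hs0
  have hDs' : 0 < b * s + ρ := hD s hs0
  have hne : 1 - θ * (β₁ * ρ / (ρ + β₁ * s * (1 - ρ))) ≠ 0 := by
    have : 1 - θ * (β₁ * ρ / (ρ + β₁ * s * (1 - ρ)))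
        = (b * s + ρ') / (ρ + β₁ * s * (1 - ρ)) := by
      field_simp
      rw [hbdef, hρ'def]; ring
    rw [this]
    positivity
  have hrw : 1 - θ * (β₁ * ρ / (ρ + β₁ * s * (1 - ρ)))
      = (b * s + ρ') / (ρ + β₁ * s * (1 - ρ)) := by
    field_simp
    rw [hbdef, hρ'def]; ring
  simp only [hgdef, hK₁def, hK₂def, hC₀def, hrw, div_div_eq_mul_div]
  have e1 := hEs.ne'
  have e2 := hDs.ne'
  have e3 := hDs'.ne'
  have e4 := hb0.ne'
  field_simp
  rw [div_eq_iff (by rw [mul_comm s β₁]; exact e2)]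
  rw [hbdef, hρ'def]
  ring
end

section
/- The second derivative of E(s̄₄) equals β₁²ρ(ρ-1)·( 2θ²N₀ρ(1-β₁θ)/(ρ+β₁s̄₄(1-ρ)-θβ₁ρ)³ - 2λ(1-ρ)/(ρ+β₁s̄₄(1-ρ))³ ), and this is nonnegative at s̄₄ if and only if N₀ ≤ f(s̄₄) where f(s̄₄) = λ(1-ρ)(β₁s̄₄ + ρ(1-β₁s̄₄) - ρβ₁θ)³ / (θ²ρ(1-β₁θ)(β₁s̄₄ + ρ(1-β₁s̄₄))³). -/
open Filter Topology

set_option maxHeartbeats 1000000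

/-- Explicit second derivative of E, and its nonnegativity iff N₀ ≤ f(s̄₄). -/
theorem stmt_9 (ρ β₁ θ N₀ lam : ℝ) (hρ0 : 0 < ρ) (hρ1 : ρ < 1)
    (hβ0 : 0 < β₁) (hβ1 : β₁ < 1) (hθ0 : 0 < θ) (hθ1 : θ < 1) (hθβ : θ * β₁ < 1)
    (hN : 0 < N₀) (hlam : 0 < lam) :
    let E : ℝ → ℝ := fun s =>
      θ * N₀ * s / (1 - θ * (β₁ * ρ / (ρ + β₁ * s * (1 - ρ)))) +
      lam * ((1 - β₁) * ρ / (ρ + β₁ * s * (1 - ρ)) + β₁ * ρ / (ρ + β₁ * s * (1 - ρ)))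
    let f : ℝ → ℝ := fun s =>
      lam * (1 - ρ) * (β₁ * s + ρ * (1 - β₁ * s) - ρ * β₁ * θ) ^ 3 /
        (θ ^ 2 * ρ * (1 - β₁ * θ) * (β₁ * s + ρ * (1 - β₁ * s)) ^ 3)
    ∀ s ∈ Set.Icc (0:ℝ) 1,
      deriv (deriv E) s =
        β₁ ^ 2 * ρ * (ρ - 1) *
          (2 * θ ^ 2 * N₀ * ρ * (1 - β₁ * θ) / (ρ + β₁ * s * (1 - ρ) - θ * β₁ * ρ) ^ 3
            - 2 * lam * (1 - ρ) / (ρ + β₁ * s * (1 - ρ)) ^ 3) ∧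
      (0 ≤ deriv (deriv E) s ↔ N₀ ≤ f s) := by
  intro E f s hs
  obtain ⟨hs0, hs1⟩ := hs
  have hEdef : E = fun s =>
      θ * N₀ * s / (1 - θ * (β₁ * ρ / (ρ + β₁ * s * (1 - ρ)))) +
      lam * ((1 - β₁) * ρ / (ρ + β₁ * s * (1 - ρ)) + β₁ * ρ / (ρ + β₁ * s * (1 - ρ))) := rfl
  have hfdef : f = fun s =>
      lam * (1 - ρ) * (β₁ * s + ρ * (1 - β₁ * s) - ρ * β₁ * θ) ^ 3 /
        (θ ^ 2 * ρ * (1 - β₁ * θ) * (β₁ * s + ρ * (1 - β₁ * s)) ^ 3) := rfl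
  set a : ℝ := β₁ * (1 - ρ) with ha_def
  set c : ℝ := ρ * (1 - θ * β₁) with hc_def
  have ha : 0 < a := by rw [ha_def]; exact mul_pos hβ0 (by linarith)
  have hc : 0 < c := by rw [hc_def]; nlinarith
  have hC : 0 < c + a * s := by nlinarith
  have hD : 0 < ρ + a * s := by nlinarith
  set g : ℝ → ℝ := fun t =>
    θ * N₀ * t + θ ^ 2 * β₁ * N₀ * ρ / a - (θ ^ 2 * β₁ * N₀ * ρ * c / a) * (c + a * t)⁻¹
      + lam * ρ * (ρ + a * t)⁻¹ with hgdef
  set g1 : ℝ → ℝ := fun t =>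
    θ * N₀ + (θ ^ 2 * β₁ * N₀ * ρ * c) * ((c + a * t) ^ 2)⁻¹
      - lam * ρ * a * ((ρ + a * t) ^ 2)⁻¹ with hg1def
  -- E = g where denominators are positive
  have hV : ∀ t : ℝ, 0 < c + a * t → 0 < ρ + a * t → E t = g t := by
    intro t h1 h2
    have hden : ρ + β₁ * t * (1 - ρ) = ρ + a * t := by rw [ha_def]; ring
    have h2' : ρ + β₁ * t * (1 - ρ) ≠ 0 := by rw [hden]; exact h2.ne'
    have hbig : 1 - θ * (β₁ * ρ / (ρ + β₁ * t * (1 - ρ))) = (c + a * t) / (ρ + a * t) := by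
      rw [hden, eq_div_iff h2.ne']; field_simp; rw [hc_def, ha_def]
      ring
    rw [hEdef, hgdef]
    simp only
    rw [hbig, hden]
    rw [div_div_eq_mul_div]
    have := h1.ne'; have := h2.ne'; have := ha.ne'
    have : c + t * a ≠ 0 := by rw [mul_comm]; exact h1.ne'
    have : ρ + t * a ≠ 0 := by rw [mul_comm]; exact h2.ne'
    field_simp
    rw [hc_def, ha_def]
    ring
  -- derivative of g
  have hg : ∀ t : ℝ, c + a * t ≠ 0 → ρ + a * t ≠ 0 → HasDerivAt g (g1 t) t := by
    intro t h1 h2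
    have l1 : HasDerivAt (fun t : ℝ => c + a * t) a t := by
      simpa using ((hasDerivAt_id t).const_mul a).const_add c
    have l2 : HasDerivAt (fun t : ℝ => ρ + a * t) a t := by
      simpa using ((hasDerivAt_id t).const_mul a).const_add ρ
    have t1 : HasDerivAt (fun t : ℝ => θ * N₀ * t + θ ^ 2 * β₁ * N₀ * ρ / a) (θ * N₀) t := by
      simpa using ((hasDerivAt_id t).const_mul (θ * N₀)).add_const (θ ^ 2 * β₁ * N₀ * ρ / a)
    have t2 := (l1.inv h1).const_mul (θ ^ 2 * β₁ * N₀ * ρ * c / a)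
    have t3 := (l2.inv h2).const_mul (lam * ρ)
    have H := (t1.sub t2).add t3
    refine H.congr_deriv ?_
    rw [hg1def]
    simp only
    field_simp
    ring
  -- derivative of g1
  have hg1' : ∀ t : ℝ, c + a * t ≠ 0 → ρ + a * t ≠ 0 →
      HasDerivAt g1 ((θ ^ 2 * β₁ * N₀ * ρ * c) * (-(2 * (c + a * t) ^ 1 * a) / ((c + a * t) ^ 2) ^ 2)
        - lam * ρ * a * (-(2 * (ρ + a * t) ^ 1 * a) / ((ρ + a * t) ^ 2) ^ 2)) t := by
    intro t h1 h2
    have l1 : HasDerivAt (fun t : ℝ => c + a * t) a t := by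
      simpa using ((hasDerivAt_id t).const_mul a).const_add c
    have l2 : HasDerivAt (fun t : ℝ => ρ + a * t) a t := by
      simpa using ((hasDerivAt_id t).const_mul a).const_add ρ
    have p1 := ((l1.pow 2).inv (pow_ne_zero 2 h1)).const_mul (θ ^ 2 * β₁ * N₀ * ρ * c)
    have p2 := ((l2.pow 2).inv (pow_ne_zero 2 h2)).const_mul (lam * ρ * a)
    have H := (p1.const_add (θ * N₀)).sub p2
    refine H.congr_deriv ?_
    simp
  -- eventual equalities
  have hopen : ∀ᶠ t in 𝓝 s, 0 < c + a * t ∧ 0 < ρ + a * t := by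
    have k1 : ContinuousAt (fun t : ℝ => c + a * t) s := by fun_prop
    have k2 : ContinuousAt (fun t : ℝ => ρ + a * t) s := by fun_prop
    exact (k1.eventually (eventually_gt_nhds hC)).and (k2.eventually (eventually_gt_nhds hD))
  have hEg : E =ᶠ[𝓝 s] g := hopen.mono fun t ht => hV t ht.1 ht.2
  have hdE : deriv E =ᶠ[𝓝 s] g1 :=
    hEg.deriv.trans (hopen.mono fun t ht => (hg t ht.1.ne' ht.2.ne').deriv)
  have hd2 : deriv (deriv E) s =
      (θ ^ 2 * β₁ * N₀ * ρ * c) * (-(2 * (c + a * s) ^ 1 * a) / ((c + a * s) ^ 2) ^ 2)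
        - lam * ρ * a * (-(2 * (ρ + a * s) ^ 1 * a) / ((ρ + a * s) ^ 2) ^ 2) := by
    rw [hdE.deriv_eq]
    exact (hg1' s hC.ne' hD.ne').deriv
  -- identify with claimed formula
  have hden1 : ρ + β₁ * s * (1 - ρ) - θ * β₁ * ρ = c + a * s := by
    rw [hc_def, ha_def]; ring
  have hden2 : ρ + β₁ * s * (1 - ρ) = ρ + a * s := by rw [ha_def]; ring
  have hmain : deriv (deriv E) s =
      β₁ ^ 2 * ρ * (ρ - 1) *
        (2 * θ ^ 2 * N₀ * ρ * (1 - β₁ * θ) / (ρ + β₁ * s * (1 - ρ) - θ * β₁ * ρ) ^ 3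
          - 2 * lam * (1 - ρ) / (ρ + β₁ * s * (1 - ρ)) ^ 3) := by
    rw [hd2, hden1, hden2]
    field_simp
    rw [hc_def, ha_def]
    ring
  refine ⟨hmain, ?_⟩
  rw [hmain]
  -- rewrite as a single fraction
  have key : β₁ ^ 2 * ρ * (ρ - 1) *
        (2 * θ ^ 2 * N₀ * ρ * (1 - β₁ * θ) / (ρ + β₁ * s * (1 - ρ) - θ * β₁ * ρ) ^ 3
          - 2 * lam * (1 - ρ) / (ρ + β₁ * s * (1 - ρ)) ^ 3) =
      (2 * a * ρ) * ((lam * a * (c + a * s) ^ 3 - θ ^ 2 * β₁ * N₀ * c * (ρ + a * s) ^ 3)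
        / ((c + a * s) ^ 3 * (ρ + a * s) ^ 3)) := by
    rw [hden1, hden2]
    field_simp
    rw [hc_def, ha_def]
    ring
  rw [key, hfdef]
  simp only
  have hde : β₁ * s + ρ * (1 - β₁ * s) = ρ + a * s := by rw [ha_def]; ring
  have hde2 : β₁ * s + ρ * (1 - β₁ * s) - ρ * β₁ * θ = c + a * s := by rw [hc_def, ha_def]; ring
  rw [hde2, hde]
  have hfden : 0 < θ ^ 2 * ρ * (1 - β₁ * θ) * (ρ + a * s) ^ 3 := by
    have : 0 < 1 - β₁ * θ := by nlinarith
    positivity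
  rw [le_div_iff₀ hfden]
  rw [mul_nonneg_iff_of_pos_left (by positivity : (0:ℝ) < 2 * a * ρ)]
  rw [le_div_iff₀ (by positivity : (0:ℝ) < (c + a * s) ^ 3 * (ρ + a * s) ^ 3), zero_mul,
    sub_nonneg]
  constructor
  · intro h
    have e1 : θ ^ 2 * β₁ * N₀ * c * (ρ + a * s) ^ 3
        = β₁ * (N₀ * (θ ^ 2 * ρ * (1 - β₁ * θ) * (ρ + a * s) ^ 3)) := by
      rw [hc_def]; ring
    have e2 : lam * a * (c + a * s) ^ 3 = β₁ * (lam * (1 - ρ) * (c + a * s) ^ 3) := by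
      rw [ha_def]; ring
    rw [e1, e2, mul_le_mul_iff_right₀ hβ0] at h
    exact h
  · intro h
    have e1 : θ ^ 2 * β₁ * N₀ * c * (ρ + a * s) ^ 3
        = β₁ * (N₀ * (θ ^ 2 * ρ * (1 - β₁ * θ) * (ρ + a * s) ^ 3)) := by
      rw [hc_def]; ring
    have e2 : lam * a * (c + a * s) ^ 3 = β₁ * (lam * (1 - ρ) * (c + a * s) ^ 3) := by
      rw [ha_def]; ring
    rw [e1, e2, mul_le_mul_iff_right₀ hβ0]
    exact h
end

section
/- The function f(s̄₄) = λ(1-ρ)(β₁s̄₄ + ρ(1-β₁s̄₄) - ρβ₁θ)³ / (θ²ρ(1-β₁θ)(β₁s̄₄ + ρ(1-β₁s̄₄))³) is monotonically nondecreasing on [0,1], with f(0) = λ(1-ρ)(1-β₁θ)²/(ρθ²). -/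
/-- f(s̄₄) is nondecreasing on [0,1] and f(0) = λ(1-ρ)(1-β₁θ)²/(ρθ²). -/
theorem stmt_10 (ρ β₁ θ lam : ℝ) (hρ0 : 0 < ρ) (hρ1 : ρ < 1)
    (hβ0 : 0 < β₁) (hβ1 : β₁ < 1) (hθ0 : 0 < θ) (hθ1 : θ < 1) (hθβ : θ * β₁ < 1)
    (hlam : 0 < lam) :
    let f : ℝ → ℝ := fun s =>
      lam * (1 - ρ) * (β₁ * s + ρ * (1 - β₁ * s) - ρ * β₁ * θ) ^ 3 /
        (θ ^ 2 * ρ * (1 - β₁ * θ) * (β₁ * s + ρ * (1 - β₁ * s)) ^ 3)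
    MonotoneOn f (Set.Icc (0:ℝ) 1) ∧
    f 0 = lam * (1 - ρ) * (1 - β₁ * θ) ^ 2 / (ρ * θ ^ 2) := by
  intro f
  have hβθ : β₁ * θ < 1 := by linarith [mul_comm θ β₁, hθβ]
  have h1 : (0:ℝ) < 1 - β₁ * θ := by linarith
  have h2 : (0:ℝ) < 1 - ρ := by linarith
  constructor
  · intro x hx y hy hxy
    obtain ⟨hx0, hx1⟩ := hx
    obtain ⟨hy0, hy1⟩ := hy
    set gx := β₁ * x + ρ * (1 - β₁ * x) with hgxdef
    set gy := β₁ * y + ρ * (1 - β₁ * y) with hgydef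
    set a := ρ * β₁ * θ with hadef
    have hgx : ρ ≤ gx := by
      have h : gx = ρ + β₁ * x * (1 - ρ) := by rw [hgxdef]; ring
      nlinarith [mul_nonneg (mul_nonneg hβ0.le hx0) h2.le]
    have hgy : ρ ≤ gy := by
      have h : gy = ρ + β₁ * y * (1 - ρ) := by rw [hgydef]; ring
      nlinarith [mul_nonneg (mul_nonneg hβ0.le hy0) h2.le]
    have hle : gx ≤ gy := by
      have h : gy - gx = β₁ * (y - x) * (1 - ρ) := by rw [hgxdef, hgydef]; ring
      nlinarith [mul_nonneg (mul_nonneg hβ0.le (by linarith : (0:ℝ) ≤ y - x)) h2.le]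
    have ha0 : 0 ≤ a := by rw [hadef]; positivity
    have hax : 0 ≤ gx - a := by
      have h : ρ - a = ρ * (1 - β₁ * θ) := by rw [hadef]; ring
      nlinarith [mul_pos hρ0 h1]
    have hay : 0 ≤ gy - a := by
      have h : ρ - a = ρ * (1 - β₁ * θ) := by rw [hadef]; ring
      nlinarith [mul_pos hρ0 h1]
    have hkey : (gx - a) * gy ≤ (gy - a) * gx := by
      nlinarith [mul_nonneg ha0 (by linarith : (0:ℝ) ≤ gy - gx)]
    have hgx0 : (0:ℝ) < gx := lt_of_lt_of_le hρ0 hgx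
    have hgy0 : (0:ℝ) < gy := lt_of_lt_of_le hρ0 hgy
    have hcube : ((gx - a) * gy) ^ 3 ≤ ((gy - a) * gx) ^ 3 :=
      pow_le_pow_left₀ (mul_nonneg hax hgy0.le) hkey 3
    have hC : (0:ℝ) < lam * (1 - ρ) * (θ ^ 2 * ρ * (1 - β₁ * θ)) :=
      mul_pos (mul_pos hlam h2) (mul_pos (mul_pos (pow_pos hθ0 2) hρ0) h1)
    have hmul := mul_le_mul_of_nonneg_left hcube hC.le
    have hdx : (0:ℝ) < θ ^ 2 * ρ * (1 - β₁ * θ) * gx ^ 3 :=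
      mul_pos (mul_pos (mul_pos (pow_pos hθ0 2) hρ0) h1) (pow_pos hgx0 3)
    have hdy : (0:ℝ) < θ ^ 2 * ρ * (1 - β₁ * θ) * gy ^ 3 :=
      mul_pos (mul_pos (mul_pos (pow_pos hθ0 2) hρ0) h1) (pow_pos hgy0 3)
    show lam * (1 - ρ) * (gx - a) ^ 3 / (θ ^ 2 * ρ * (1 - β₁ * θ) * gx ^ 3)
        ≤ lam * (1 - ρ) * (gy - a) ^ 3 / (θ ^ 2 * ρ * (1 - β₁ * θ) * gy ^ 3)
    rw [div_le_div_iff₀ hdx hdy]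
    have e1 : lam * (1 - ρ) * (gx - a) ^ 3 * (θ ^ 2 * ρ * (1 - β₁ * θ) * gy ^ 3)
        = lam * (1 - ρ) * (θ ^ 2 * ρ * (1 - β₁ * θ)) * ((gx - a) * gy) ^ 3 := by ring
    have e2 : lam * (1 - ρ) * (gy - a) ^ 3 * (θ ^ 2 * ρ * (1 - β₁ * θ) * gx ^ 3)
        = lam * (1 - ρ) * (θ ^ 2 * ρ * (1 - β₁ * θ)) * ((gy - a) * gx) ^ 3 := by ring
    linarith [hmul, e1.ge, e2.le]
  · show lam * (1 - ρ) * (β₁ * 0 + ρ * (1 - β₁ * 0) - ρ * β₁ * θ) ^ 3 /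
        (θ ^ 2 * ρ * (1 - β₁ * θ) * (β₁ * 0 + ρ * (1 - β₁ * 0)) ^ 3)
        = lam * (1 - ρ) * (1 - β₁ * θ) ^ 2 / (ρ * θ ^ 2)
    have hq : β₁ * 0 + ρ * (1 - β₁ * 0) = ρ := by ring
    rw [hq, div_eq_div_iff (by positivity) (by positivity)]
    ring
end

section
/- E'(1) ≤ 0 if and only if N₀ ≤ N₀¹ := λβ₁(1-ρ)ρ(ρ + β₁ - β₁ρ(1+θ))² / ((β₁+ρ-β₁ρ)² · θ(2β₁(1-ρ)ρ(1-θβ₁) + ρ²(1-θβ₁) + β₁²(1-ρ)²)), where E'(s̄₄) = θN₀(2β₁ρs̄₄(1-ρ)(1-θβ₁) + ρ²(1-θβ₁) + s̄₄²β₁²(1-ρ)²)/(ρ + β₁s̄₄(1-ρ) - θβ₁ρ)² - λρβ₁(1-ρ)/(ρ + β₁s̄₄(1-ρ))². -/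
/-- E'(1) ≤ 0 iff N₀ ≤ N₀¹. -/
theorem stmt_12 (ρ β₁ θ N₀ lam : ℝ) (hρ0 : 0 < ρ) (hρ1 : ρ < 1)
    (hβ0 : 0 < β₁) (hβ1 : β₁ < 1) (hθ0 : 0 < θ) (hθ1 : θ < 1) (hθβ : θ * β₁ < 1)
    (hN : 0 < N₀) (hlam : 0 < lam) :
    let E' : ℝ → ℝ := fun s =>
      θ * N₀ * (2 * β₁ * ρ * s * (1 - ρ) * (1 - θ * β₁) + ρ ^ 2 * (1 - θ * β₁)
          + s ^ 2 * β₁ ^ 2 * (1 - ρ) ^ 2) /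
        (ρ + β₁ * s * (1 - ρ) - θ * β₁ * ρ) ^ 2
      - lam * ρ * β₁ * (1 - ρ) / (ρ + β₁ * s * (1 - ρ)) ^ 2
    (E' 1 ≤ 0 ↔
      N₀ ≤ lam * β₁ * (1 - ρ) * ρ * (ρ + β₁ - β₁ * ρ * (1 + θ)) ^ 2 /
        ((β₁ + ρ - β₁ * ρ) ^ 2 *
          (θ * (2 * β₁ * (1 - ρ) * ρ * (1 - θ * β₁) + ρ ^ 2 * (1 - θ * β₁)
            + β₁ ^ 2 * (1 - ρ) ^ 2)))) := by
  intro E'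
  have hθβ' : 0 < 1 - θ * β₁ := by linarith
  have hρ' : 0 < 1 - ρ := by linarith
  have h1 : 0 < ρ + β₁ * 1 * (1 - ρ) - θ * β₁ * ρ := by nlinarith
  have h2 : 0 < ρ + β₁ * 1 * (1 - ρ) := by nlinarith
  have hA : 0 < 2 * β₁ * (1 - ρ) * ρ * (1 - θ * β₁) + ρ ^ 2 * (1 - θ * β₁)
      + β₁ ^ 2 * (1 - ρ) ^ 2 := by positivity
  have hY : 0 < (β₁ + ρ - β₁ * ρ) ^ 2 *
      (θ * (2 * β₁ * (1 - ρ) * ρ * (1 - θ * β₁) + ρ ^ 2 * (1 - θ * β₁)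
        + β₁ ^ 2 * (1 - ρ) ^ 2)) := by
    apply mul_pos _ (mul_pos hθ0 hA)
    have : (0:ℝ) < β₁ + ρ - β₁ * ρ := by nlinarith
    positivity
  show _ ≤ _ ↔ _
  rw [sub_nonpos, div_le_div_iff₀ (by positivity) (by positivity),
    le_div_iff₀ hY]
  constructor <;> intro h <;> nlinarith [h, sq_nonneg (ρ + β₁ - β₁ * ρ)]
end
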